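/- Let μ, κ, a > 0, γ ≥ 1, and set α = κ/μ. Let ρ : ℝ × ℝ^N → ℝ and u : ℝ × ℝ^N → ℝ^N be smooth with ρ > 0 everywhere, solving the Korteweg system ∂_t ρ + div(ρu) = 0 and ∂_t(ρu) + div(ρu⊗u) − div(μρ∇u) − div(αρ∇u^T) + ∇(aρ^γ) = κ div(ρ∇∇ln ρ). Then the effective velocity v := u + (κ/μ)∇ln ρ satisfies the system ∂_t ρ + div(ρv) − (κ/μ)Δρ = 0 and ρ∂_t v + ρ(u·∇)v − div(μρ∇v) + ∇(aρ^γ) = 0 pointwise. -/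

import Mathlib

open Real

/-- `i`-th partial derivative of a function on `ℝ^N`. -/
noncomputable def pd {N : ℕ} (i : Fin N) (f : (Fin N → ℝ) → ℝ) (x : Fin N → ℝ) : ℝ :=
  fderiv ℝ f x (Pi.single i 1)

/-- Laplacian on `ℝ^N`. -/
noncomputable def lap {N : ℕ} (f : (Fin N → ℝ) → ℝ) (x : Fin N → ℝ) : ℝ :=
  ∑ i : Fin N, pd i (fun y => pd i f y) x

section helpers

variable {N : ℕ}

lemma pd_of_hasFDerivAt {f : (Fin N → ℝ) → ℝ} {x : Fin N → ℝ} {f' : (Fin N → ℝ) →L[ℝ] ℝ}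
    (h : HasFDerivAt f f' x) (i : Fin N) : pd i f x = f' (Pi.single i 1) := by
  rw [pd, h.fderiv]

lemma pd_add {f g : (Fin N → ℝ) → ℝ} {x : Fin N → ℝ} (hf : DifferentiableAt ℝ f x)
    (hg : DifferentiableAt ℝ g x) (i : Fin N) :
    pd i (fun y => f y + g y) x = pd i f x + pd i g x := by
  rw [pd, fderiv_fun_add hf hg]; rfl

lemma pd_neg {f : (Fin N → ℝ) → ℝ} {x : Fin N → ℝ} (i : Fin N) :
    pd i (fun y => -f y) x = -pd i f x := by
  rw [pd, fderiv_fun_neg]; rfl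

lemma pd_sum {ι : Type*} {s : Finset ι} {f : ι → (Fin N → ℝ) → ℝ} {x : Fin N → ℝ}
    (h : ∀ k ∈ s, DifferentiableAt ℝ (f k) x) (i : Fin N) :
    pd i (fun y => ∑ k ∈ s, f k y) x = ∑ k ∈ s, pd i (f k) x := by
  rw [pd, fderiv_fun_sum h]
  simp [pd, ContinuousLinearMap.sum_apply]

lemma pd_const_mul {f : (Fin N → ℝ) → ℝ} {x : Fin N → ℝ} (hf : DifferentiableAt ℝ f x)
    (c : ℝ) (i : Fin N) : pd i (fun y => c * f y) x = c * pd i f x := by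
  rw [pd, fderiv_const_mul hf c]; rfl

lemma pd_mul {f g : (Fin N → ℝ) → ℝ} {x : Fin N → ℝ} (hf : DifferentiableAt ℝ f x)
    (hg : DifferentiableAt ℝ g x) (i : Fin N) :
    pd i (fun y => f y * g y) x = f x * pd i g x + pd i f x * g x := by
  rw [pd, fderiv_fun_mul hf hg]
  simp [pd, smul_eq_mul]
  ring

lemma pd_log {f : (Fin N → ℝ) → ℝ} {x : Fin N → ℝ} (hf : DifferentiableAt ℝ f x)
    (hx : f x ≠ 0) (i : Fin N) :
    pd i (fun y => Real.log (f y)) x = pd i f x / f x := by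
  rw [pd_of_hasFDerivAt (hf.hasFDerivAt.log hx) i]
  simp [pd, div_eq_inv_mul]

lemma pd_inv {f : (Fin N → ℝ) → ℝ} {x : Fin N → ℝ} (hf : DifferentiableAt ℝ f x)
    (hx : f x ≠ 0) (i : Fin N) :
    pd i (fun y => (f y)⁻¹) x = -pd i f x / f x ^ 2 := by
  have h : HasFDerivAt (fun y => (f y)⁻¹) ((-(f x ^ 2)⁻¹) • fderiv ℝ f x) x :=
    (hasDerivAt_inv hx).comp_hasFDerivAt x hf.hasFDerivAt
  rw [pd_of_hasFDerivAt h i]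
  simp [pd]
  ring

lemma pd_div {f g : (Fin N → ℝ) → ℝ} {x : Fin N → ℝ} (hf : DifferentiableAt ℝ f x)
    (hg : DifferentiableAt ℝ g x) (hx : g x ≠ 0) (i : Fin N) :
    pd i (fun y => f y / g y) x = (pd i f x * g x - f x * pd i g x) / g x ^ 2 := by
  have h1 : pd i (fun y => f y * (g y)⁻¹) x
      = f x * pd i (fun y => (g y)⁻¹) x + pd i f x * (g x)⁻¹ :=
    pd_mul hf (hg.inv hx) i
  simp only [div_eq_mul_inv]
  rw [h1, pd_inv hg hx i]
  field_simp
  ring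

lemma contDiff_pd {f : (Fin N → ℝ) → ℝ} (hf : ContDiff ℝ (⊤ : ℕ∞) f) (i : Fin N) :
    ContDiff ℝ (⊤ : ℕ∞) (fun y => pd i f y) := by
  simp only [pd]
  exact (hf.fderiv_right (by simp)).clm_apply contDiff_const

lemma fderiv_swap {E : Type*} [NormedAddCommGroup E] [NormedSpace ℝ E] {F : E → ℝ}
    (hF : ContDiff ℝ (⊤ : ℕ∞) F) (p v w : E) :
    fderiv ℝ (fun q => fderiv ℝ F q w) p v = fderiv ℝ (fun q => fderiv ℝ F q v) p w := by
  have hd : ∀ q, HasFDerivAt F (fderiv ℝ F q) q := fun q =>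
    (hF.differentiable (by simp) q).hasFDerivAt
  have hd2 : HasFDerivAt (fderiv ℝ F) (fderiv ℝ (fderiv ℝ F) p) p :=
    ((hF.fderiv_right (m := (⊤ : ℕ∞)) (by simp)).differentiable (by simp) p).hasFDerivAt
  have key : ∀ z v : E, fderiv ℝ (fun q => fderiv ℝ F q z) p v
      = fderiv ℝ (fderiv ℝ F) p v z := by
    intro z v
    have h : HasFDerivAt (fun q => fderiv ℝ F q z)
        ((ContinuousLinearMap.apply ℝ ℝ z).comp (fderiv ℝ (fderiv ℝ F) p)) p :=
      ((ContinuousLinearMap.apply ℝ ℝ z).hasFDerivAt).comp p hd2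
    rw [h.fderiv]; rfl
  rw [key, key, second_derivative_symmetric hd hd2 v w]

lemma pd_pd_swap {f : (Fin N → ℝ) → ℝ} (hf : ContDiff ℝ (⊤ : ℕ∞) f) (i j : Fin N) (x : Fin N → ℝ) :
    pd i (fun y => pd j f y) x = pd j (fun y => pd i f y) x := by
  simp only [pd]
  exact fderiv_swap hf x _ _

lemma pd_slice {F : ℝ × (Fin N → ℝ) → ℝ} {t : ℝ} {x : Fin N → ℝ}
    (hF : DifferentiableAt ℝ F (t, x)) (i : Fin N) :
    pd i (fun y => F (t, y)) x = fderiv ℝ F (t, x) (0, Pi.single i 1) := by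
  have h : HasFDerivAt (fun y => F (t, y))
      ((fderiv ℝ F (t, x)).comp (ContinuousLinearMap.inr ℝ ℝ (Fin N → ℝ))) x :=
    hF.hasFDerivAt.comp x (hasFDerivAt_prodMk_right t x)
  rw [pd_of_hasFDerivAt h i]; rfl

lemma deriv_slice {F : ℝ × (Fin N → ℝ) → ℝ} {t : ℝ} {x : Fin N → ℝ}
    (hF : DifferentiableAt ℝ F (t, x)) :
    deriv (fun s => F (s, x)) t = fderiv ℝ F (t, x) (1, 0) := by
  have h : HasDerivAt (fun s => F (s, x)) (fderiv ℝ F (t, x) ((1 : ℝ), (0 : Fin N → ℝ))) t := by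
    have h2 : HasDerivAt (fun s : ℝ => (s, x)) ((1 : ℝ), (0 : Fin N → ℝ)) t :=
      (hasDerivAt_id t).prodMk (hasDerivAt_const t x)
    exact hF.hasFDerivAt.comp_hasDerivAt t h2
  exact h.deriv

lemma deriv_pd_swap {F : ℝ × (Fin N → ℝ) → ℝ} (hF : ContDiff ℝ (⊤ : ℕ∞) F) (t : ℝ)
    (x : Fin N → ℝ) (j : Fin N) :
    deriv (fun s => pd j (fun y => F (s, y)) x) t
      = pd j (fun y => deriv (fun s => F (s, y)) t) x := by
  have hdiff : Differentiable ℝ F := hF.differentiable (by simp)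
  have h1 : (fun s => pd j (fun y => F (s, y)) x)
      = fun s => (fun q => fderiv ℝ F q ((0 : ℝ), Pi.single j 1)) (s, x) := by
    funext s; exact pd_slice (hdiff (s, x)) j
  have hG : ContDiff ℝ (⊤ : ℕ∞) (fun q => fderiv ℝ F q ((0 : ℝ), Pi.single j 1)) :=
    (hF.fderiv_right (by simp)).clm_apply contDiff_const
  have hG2 : ContDiff ℝ (⊤ : ℕ∞) (fun q => fderiv ℝ F q ((1 : ℝ), (0 : Fin N → ℝ))) :=
    (hF.fderiv_right (by simp)).clm_apply contDiff_const
  rw [h1, deriv_slice (hG.differentiable (by simp) (t, x))]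
  rw [fderiv_swap hF (t, x) ((1 : ℝ), (0 : Fin N → ℝ)) ((0 : ℝ), Pi.single j 1)]
  rw [← pd_slice (hG2.differentiable (by simp) (t, x)) j]
  congr 1; funext y; exact (deriv_slice (hdiff (t, y))).symm

end helpers

/-- If `(ρ,u)` smooth, `ρ > 0`, solves the Korteweg system
`∂_t ρ + div(ρu) = 0`,
`∂_t(ρu) + div(ρu⊗u) − div(μρ∇u) − div(αρ∇uᵀ) + ∇(aρ^γ) = κ div(ρ∇∇ln ρ)` with `α = κ/μ`,
then the effective velocity `v = u + (κ/μ)∇ln ρ` satisfies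
`∂_t ρ + div(ρv) − (κ/μ)Δρ = 0` and `ρ∂_t v + ρ(u·∇)v − div(μρ∇v) + ∇(aρ^γ) = 0`. -/
theorem effective_velocity_reformulation (N : ℕ) (μ κ a γ : ℝ)
    (hμ : 0 < μ) (hκ : 0 < κ) (ha : 0 < a) (hγ : 1 ≤ γ)
    (ρ : ℝ × (Fin N → ℝ) → ℝ) (u v : ℝ × (Fin N → ℝ) → Fin N → ℝ)
    (hρ : ContDiff ℝ (⊤ : ℕ∞) ρ) (hu : ContDiff ℝ (⊤ : ℕ∞) u) (hpos : ∀ p, 0 < ρ p)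
    (hv : ∀ (t : ℝ) (x : Fin N → ℝ) (j : Fin N),
      v (t, x) j = u (t, x) j + (κ / μ) * pd j (fun y => Real.log (ρ (t, y))) x)
    (mass : ∀ (t : ℝ) (x : Fin N → ℝ),
      deriv (fun s => ρ (s, x)) t
        + ∑ i : Fin N, pd i (fun y => ρ (t, y) * u (t, y) i) x = 0)
    (momentum : ∀ (t : ℝ) (x : Fin N → ℝ) (j : Fin N),
      deriv (fun s => ρ (s, x) * u (s, x) j) t
        + ∑ i : Fin N, pd i (fun y => ρ (t, y) * u (t, y) i * u (t, y) j) x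
        - ∑ i : Fin N, pd i (fun y => μ * ρ (t, y) * pd i (fun z => u (t, z) j) y) x
        - ∑ i : Fin N, pd i (fun y => (κ / μ) * ρ (t, y) * pd j (fun z => u (t, z) i) y) x
        + pd j (fun y => a * ρ (t, y) ^ γ) x
      = κ * ∑ i : Fin N,
          pd i (fun y => ρ (t, y) * pd i (fun z => pd j (fun w => Real.log (ρ (t, w))) z) y) x) :
    (∀ (t : ℝ) (x : Fin N → ℝ),
      deriv (fun s => ρ (s, x)) t
        + ∑ i : Fin N, pd i (fun y => ρ (t, y) * v (t, y) i) x
        - (κ / μ) * lap (fun y => ρ (t, y)) x = 0)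
    ∧
    (∀ (t : ℝ) (x : Fin N → ℝ) (j : Fin N),
      ρ (t, x) * deriv (fun s => v (s, x) j) t
        + ρ (t, x) * ∑ i : Fin N, u (t, x) i * pd i (fun y => v (t, y) j) x
        - ∑ i : Fin N, pd i (fun y => μ * ρ (t, y) * pd i (fun z => v (t, z) j) y) x
        + pd j (fun y => a * ρ (t, y) ^ γ) x = 0) := by
  have hμ0 : μ ≠ 0 := hμ.ne'
  have hρd : Differentiable ℝ ρ := hρ.differentiable (by simp)
  have hne : ∀ p, ρ p ≠ 0 := fun p => (hpos p).ne'
  have cR : ∀ t, ContDiff ℝ (⊤ : ℕ∞) (fun y => ρ (t, y)) := fun t =>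
    hρ.comp (contDiff_const.prodMk contDiff_id)
  have cU : ∀ t (k : Fin N), ContDiff ℝ (⊤ : ℕ∞) (fun y => u (t, y) k) := fun t k =>
    (contDiff_pi.mp hu k).comp (contDiff_const.prodMk contDiff_id)
  constructor
  · -- Part 1
    intro t x
    have key : ∀ i : Fin N, pd i (fun y => ρ (t, y) * v (t, y) i) x
        = pd i (fun y => ρ (t, y) * u (t, y) i) x
          + κ / μ * pd i (fun y => pd i (fun z => ρ (t, z)) y) x := by
      intro i
      have hfe : (fun y => ρ (t, y) * v (t, y) i)
          = fun y => ρ (t, y) * u (t, y) i + κ / μ * pd i (fun z => ρ (t, z)) y := by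
        funext y
        have hlog : pd i (fun z => Real.log (ρ (t, z))) y
            = pd i (fun z => ρ (t, z)) y / ρ (t, y) :=
          pd_log ((cR t).differentiable (by simp) y) (hne (t, y)) i
        rw [hv t y i, hlog]
        field_simp [hne (t, y)]
      rw [hfe, pd_add (((cR t).mul (cU t i)).differentiable (by simp) x)
        ((contDiff_const.mul (contDiff_pd (cR t) i)).differentiable (by simp) x) i,
        pd_const_mul ((contDiff_pd (cR t) i).differentiable (by simp) x) (κ / μ) i]
    rw [Finset.sum_congr rfl fun i _ => key i, Finset.sum_add_distrib, ← Finset.mul_sum]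
    have hlap : lap (fun y => ρ (t, y)) x
        = ∑ i : Fin N, pd i (fun y => pd i (fun z => ρ (t, z)) y) x := rfl
    rw [hlap]
    have := mass t x
    ring_nf
    ring_nf at this
    linarith
  · -- Part 2
    intro t x j
    have cRt : ContDiff ℝ (⊤ : ℕ∞) (fun y => ρ (t, y)) := cR t
    have cLog : ContDiff ℝ (⊤ : ℕ∞) (fun p : ℝ × (Fin N → ℝ) => Real.log (ρ p)) := hρ.log hne
    have cLt : ContDiff ℝ (⊤ : ℕ∞) (fun w => Real.log (ρ (t, w))) :=
      cLog.comp (contDiff_const.prodMk contDiff_id)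
    have cPL : ContDiff ℝ (⊤ : ℕ∞) (fun z => pd j (fun w => Real.log (ρ (t, w))) z) :=
      contDiff_pd cLt j
    have cDjR : ContDiff ℝ (⊤ : ℕ∞) (fun y => pd j (fun z => ρ (t, z)) y) := contDiff_pd cRt j
    have cG2 : ContDiff ℝ (⊤ : ℕ∞) (fun q => fderiv ℝ ρ q ((1 : ℝ), (0 : Fin N → ℝ))) :=
      (hρ.fderiv_right (by simp)).clm_apply contDiff_const
    have hRtfun : (fun y => deriv (fun s => ρ (s, y)) t)
        = fun y => (fun q => fderiv ℝ ρ q ((1 : ℝ), (0 : Fin N → ℝ))) (t, y) := by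
      funext y; exact deriv_slice (hρd (t, y))
    have cRtd : ContDiff ℝ (⊤ : ℕ∞) (fun y => deriv (fun s => ρ (s, y)) t) := by
      rw [hRtfun]; exact cG2.comp (contDiff_const.prodMk contDiff_id)
    have dslice : ∀ (F : ℝ × (Fin N → ℝ) → ℝ), ContDiff ℝ (⊤ : ℕ∞) F → ∀ (z : Fin N → ℝ),
        DifferentiableAt ℝ (fun s => F (s, z)) t := fun F hF z =>
      ((hF.comp (contDiff_id.prodMk contDiff_const)).differentiable (by simp)) t
    have cRU : ∀ i : Fin N, ContDiff ℝ (⊤ : ℕ∞) (fun y => ρ (t, y) * u (t, y) i) := fun i =>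
      cRt.mul (cU t i)
    -- (h1) time derivative of v_j
    have e1 : (fun s => v (s, x) j)
        = fun s => u (s, x) j + κ / μ * pd j (fun y => Real.log (ρ (s, y))) x := by
      funext s; exact hv s x j
    have dU_t : DifferentiableAt ℝ (fun s => u (s, x) j) t :=
      dslice _ ((contDiff_pi.mp hu j)) x
    have hGL : ContDiff ℝ (⊤ : ℕ∞) (fun q =>
        fderiv ℝ (fun p : ℝ × (Fin N → ℝ) => Real.log (ρ p)) q ((0 : ℝ), Pi.single j 1)) :=
      (cLog.fderiv_right (by simp)).clm_apply contDiff_const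
    have e2 : (fun s => pd j (fun y => Real.log (ρ (s, y))) x)
        = fun s => (fun q =>
            fderiv ℝ (fun p : ℝ × (Fin N → ℝ) => Real.log (ρ p)) q ((0 : ℝ), Pi.single j 1)) (s, x) := by
      funext s; exact pd_slice ((cLog.differentiable (by simp)) (s, x)) j
    have dPL_t : DifferentiableAt ℝ (fun s => pd j (fun y => Real.log (ρ (s, y))) x) t := by
      rw [e2]; exact dslice _ hGL x
    have hswap : deriv (fun s => pd j (fun y => Real.log (ρ (s, y))) x) t
        = pd j (fun y => deriv (fun s => Real.log (ρ (s, y))) t) x := deriv_pd_swap cLog t x j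
    have e3 : (fun y => deriv (fun s => Real.log (ρ (s, y))) t)
        = fun y => deriv (fun s => ρ (s, y)) t / ρ (t, y) := by
      funext y
      have hd : HasDerivAt (fun s => ρ (s, y)) (deriv (fun s => ρ (s, y)) t) t :=
        (dslice ρ hρ y).hasDerivAt
      exact (hd.log (hne (t, y))).deriv
    have h1 : deriv (fun s => v (s, x) j) t
        = deriv (fun s => u (s, x) j) t
          + κ / μ * pd j (fun y => deriv (fun s => ρ (s, y)) t / ρ (t, y)) x := by
      rw [e1, deriv_fun_add dU_t (dPL_t.const_mul _), deriv_const_mul _ dPL_t, hswap, e3]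
    have h1b : pd j (fun y => deriv (fun s => ρ (s, y)) t / ρ (t, y)) x
        = (pd j (fun y => deriv (fun s => ρ (s, y)) t) x * ρ (t, x)
            - deriv (fun s => ρ (s, x)) t * pd j (fun z => ρ (t, z)) x) / ρ (t, x) ^ 2 :=
      pd_div (cRtd.differentiable (by simp) x) (cRt.differentiable (by simp) x) (hne (t, x)) j
    -- (h5) expansion of ∂_j ∂_t ρ via mass
    have e5a : (fun y => deriv (fun s => ρ (s, y)) t)
        = fun y => -∑ i : Fin N, pd i (fun z => ρ (t, z) * u (t, z) i) y := by
      funext y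
      have := mass t y
      linarith
    have swap1 : ∀ i : Fin N, pd j (fun y => pd i (fun z => ρ (t, z) * u (t, z) i) y) x
        = pd i (fun y => pd j (fun z => ρ (t, z) * u (t, z) i) y) x := fun i =>
      pd_pd_swap (cRU i) j i x
    have e5c : ∀ i : Fin N, (fun y => pd j (fun z => ρ (t, z) * u (t, z) i) y)
        = fun y => pd j (fun z => ρ (t, z)) y * u (t, y) i
            + ρ (t, y) * pd j (fun z => u (t, z) i) y := by
      intro i; funext y
      rw [pd_mul (cRt.differentiable (by simp) y) ((cU t i).differentiable (by simp) y) j]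
      ring
    have e5d : ∀ i : Fin N, pd i (fun y => pd j (fun z => ρ (t, z)) y * u (t, y) i) x
        = pd j (fun z => ρ (t, z)) x * pd i (fun z => u (t, z) i) x
          + u (t, x) i * pd i (fun y => pd j (fun z => ρ (t, z)) y) x := by
      intro i
      rw [pd_mul (cDjR.differentiable (by simp) x) ((cU t i).differentiable (by simp) x) i]
      ring
    have h5 : pd j (fun y => deriv (fun s => ρ (s, y)) t) x
        = -(pd j (fun z => ρ (t, z)) x * ∑ i : Fin N, pd i (fun z => u (t, z) i) x
            + ∑ i : Fin N, u (t, x) i * pd i (fun y => pd j (fun z => ρ (t, z)) y) x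
            + ∑ i : Fin N, pd i (fun y => ρ (t, y) * pd j (fun z => u (t, z) i) y) x) := by
      calc pd j (fun y => deriv (fun s => ρ (s, y)) t) x
          = pd j (fun y => -∑ i : Fin N, pd i (fun z => ρ (t, z) * u (t, z) i) y) x := by
            rw [e5a]
        _ = -∑ i : Fin N, pd j (fun y => pd i (fun z => ρ (t, z) * u (t, z) i) y) x := by
            rw [pd_neg]
            congr 1
            exact pd_sum (fun i _ => (contDiff_pd (cRU i) i).differentiable (by simp) x) j
        _ = -∑ i : Fin N, (pd j (fun z => ρ (t, z)) x * pd i (fun z => u (t, z) i) x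
              + u (t, x) i * pd i (fun y => pd j (fun z => ρ (t, z)) y) x
              + pd i (fun y => ρ (t, y) * pd j (fun z => u (t, z) i) y) x) := by
            congr 1
            refine Finset.sum_congr rfl fun i _ => ?_
            rw [swap1 i, e5c i,
              pd_add ((cDjR.mul (cU t i)).differentiable (by simp) x)
                ((cRt.mul (contDiff_pd (cU t i) j)).differentiable (by simp) x) i,
              e5d i]
        _ = -(pd j (fun z => ρ (t, z)) x * ∑ i : Fin N, pd i (fun z => u (t, z) i) x
              + ∑ i : Fin N, u (t, x) i * pd i (fun y => pd j (fun z => ρ (t, z)) y) x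
              + ∑ i : Fin N, pd i (fun y => ρ (t, y) * pd j (fun z => u (t, z) i) y) x) := by
            rw [Finset.sum_add_distrib, Finset.sum_add_distrib, ← Finset.mul_sum]
    -- (h2) spatial derivatives of v_j
    have h2 : ∀ (i : Fin N) (y : Fin N → ℝ), pd i (fun z => v (t, z) j) y
        = pd i (fun z => u (t, z) j) y
          + κ / μ * pd i (fun z => pd j (fun w => Real.log (ρ (t, w))) z) y := by
      intro i y
      have ef : (fun z => v (t, z) j)
          = fun z => u (t, z) j + κ / μ * pd j (fun w => Real.log (ρ (t, w))) z := by
        funext z; exact hv t z j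
      rw [ef, pd_add ((cU t j).differentiable (by simp) y)
        ((contDiff_const.mul cPL).differentiable (by simp) y) i,
        pd_const_mul (cPL.differentiable (by simp) y) (κ / μ) i]
    have ePL : (fun z => pd j (fun w => Real.log (ρ (t, w))) z)
        = fun z => pd j (fun w => ρ (t, w)) z / ρ (t, z) := by
      funext z; exact pd_log (cRt.differentiable (by simp) z) (hne (t, z)) j
    have h2b : ∀ i : Fin N, pd i (fun z => pd j (fun w => Real.log (ρ (t, w))) z) x
        = (pd i (fun y => pd j (fun z => ρ (t, z)) y) x * ρ (t, x)
            - pd j (fun z => ρ (t, z)) x * pd i (fun z => ρ (t, z)) x) / ρ (t, x) ^ 2 := by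
      intro i
      rw [ePL]
      exact pd_div (cDjR.differentiable (by simp) x) (cRt.differentiable (by simp) x) (hne (t, x)) i
    -- (G2) the convective sum
    have hG2sum : ∑ i : Fin N, u (t, x) i * pd i (fun y => v (t, y) j) x
        = (∑ i : Fin N, u (t, x) i * pd i (fun z => u (t, z) j) x)
          + κ / μ * ((∑ i : Fin N, u (t, x) i * pd i (fun y => pd j (fun z => ρ (t, z)) y) x) * ρ (t, x)
              - pd j (fun z => ρ (t, z)) x * ∑ i : Fin N, u (t, x) i * pd i (fun z => ρ (t, z)) x)
            / ρ (t, x) ^ 2 := by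
      have step : ∀ i : Fin N, u (t, x) i * pd i (fun y => v (t, y) j) x
          = u (t, x) i * pd i (fun z => u (t, z) j) x
            + κ / μ * (u (t, x) i * pd i (fun y => pd j (fun z => ρ (t, z)) y) x * ρ (t, x)
                - pd j (fun z => ρ (t, z)) x * (u (t, x) i * pd i (fun z => ρ (t, z)) x))
              / ρ (t, x) ^ 2 := by
        intro i
        rw [h2 i x, h2b i]
        ring
      rw [Finset.sum_congr rfl fun i _ => step i, Finset.sum_add_distrib, ← Finset.sum_div,
        ← Finset.mul_sum, Finset.sum_sub_distrib, ← Finset.sum_mul, ← Finset.mul_sum]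
    -- (sum3) the viscous sum
    have hsum3 : ∑ i : Fin N, pd i (fun y => μ * ρ (t, y) * pd i (fun z => v (t, z) j) y) x
        = (∑ i : Fin N, pd i (fun y => μ * ρ (t, y) * pd i (fun z => u (t, z) j) y) x)
          + κ * ∑ i : Fin N,
              pd i (fun y => ρ (t, y) * pd i (fun z => pd j (fun w => Real.log (ρ (t, w))) z) y) x := by
      have step : ∀ i : Fin N, pd i (fun y => μ * ρ (t, y) * pd i (fun z => v (t, z) j) y) x
          = pd i (fun y => μ * ρ (t, y) * pd i (fun z => u (t, z) j) y) x
            + κ * pd i (fun y => ρ (t, y) * pd i (fun z => pd j (fun w => Real.log (ρ (t, w))) z) y) x := by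
        intro i
        have ef : (fun y => μ * ρ (t, y) * pd i (fun z => v (t, z) j) y)
            = fun y => μ * ρ (t, y) * pd i (fun z => u (t, z) j) y
              + κ * (ρ (t, y) * pd i (fun z => pd j (fun w => Real.log (ρ (t, w))) z) y) := by
          funext y
          rw [h2 i y]
          field_simp
        rw [ef, pd_add (((contDiff_const.mul cRt).mul (contDiff_pd (cU t j) i)).differentiable (by simp) x)
          ((contDiff_const.mul (cRt.mul (contDiff_pd cPL i))).differentiable (by simp) x) i,
          pd_const_mul ((cRt.mul (contDiff_pd cPL i)).differentiable (by simp) x) κ i]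
      rw [Finset.sum_congr rfl fun i _ => step i, Finset.sum_add_distrib, ← Finset.mul_sum]
    -- (h6) mass at x, expanded
    have h6 : deriv (fun s => ρ (s, x)) t
        + (ρ (t, x) * ∑ i : Fin N, pd i (fun z => u (t, z) i) x
          + ∑ i : Fin N, u (t, x) i * pd i (fun z => ρ (t, z)) x) = 0 := by
      have hm := mass t x
      have step : ∀ i : Fin N, pd i (fun y => ρ (t, y) * u (t, y) i) x
          = ρ (t, x) * pd i (fun z => u (t, z) i) x
            + u (t, x) i * pd i (fun z => ρ (t, z)) x := by
        intro i
        rw [pd_mul (cRt.differentiable (by simp) x) ((cU t i).differentiable (by simp) x) i]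
        ring
      rw [Finset.sum_congr rfl fun i _ => step i, Finset.sum_add_distrib, ← Finset.mul_sum] at hm
      linarith
    -- (h7) momentum, expanded
    have hDt : deriv (fun s => ρ (s, x) * u (s, x) j) t
        = deriv (fun s => ρ (s, x)) t * u (t, x) j
          + ρ (t, x) * deriv (fun s => u (s, x) j) t :=
      deriv_fun_mul (dslice ρ hρ x) dU_t
    have hRUU : ∀ i : Fin N, pd i (fun y => ρ (t, y) * u (t, y) i * u (t, y) j) x
        = ρ (t, x) * (u (t, x) i * pd i (fun z => u (t, z) j) x)
          + (ρ (t, x) * u (t, x) j * pd i (fun z => u (t, z) i) x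
            + u (t, x) j * (u (t, x) i * pd i (fun z => ρ (t, z)) x)) := by
      intro i
      rw [pd_mul ((cRU i).differentiable (by simp) x) ((cU t j).differentiable (by simp) x) i,
        pd_mul (cRt.differentiable (by simp) x) ((cU t i).differentiable (by simp) x) i]
      ring
    have hA4 : ∀ i : Fin N, pd i (fun y => κ / μ * ρ (t, y) * pd j (fun z => u (t, z) i) y) x
        = κ / μ * pd i (fun y => ρ (t, y) * pd j (fun z => u (t, z) i) y) x := by
      intro i
      have ef : (fun y => κ / μ * ρ (t, y) * pd j (fun z => u (t, z) i) y)
          = fun y => κ / μ * (ρ (t, y) * pd j (fun z => u (t, z) i) y) := by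
        funext y; ring
      rw [ef, pd_const_mul ((cRt.mul (contDiff_pd (cU t i) j)).differentiable (by simp) x) (κ / μ) i]
    have hmom := momentum t x j
    rw [hDt, Finset.sum_congr rfl fun i _ => hRUU i, Finset.sum_add_distrib,
      Finset.sum_add_distrib, ← Finset.mul_sum, ← Finset.mul_sum, ← Finset.mul_sum,
      Finset.sum_congr rfl fun i _ => hA4 i, ← Finset.mul_sum] at hmom
    -- final assembly
    rw [h1, h1b, h5, hG2sum, hsum3]
    have hρx : ρ (t, x) ≠ 0 := hne (t, x)
    field_simp
    linear_combination (ρ (t, x) * μ) * hmom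
      - (κ * pd j (fun z => ρ (t, z)) x
          + ρ (t, x) * μ * u (t, x) j) * h6
      + (ρ (t, x) * κ
          * ∑ i : Fin N, pd i (fun y => ρ (t, y) * pd j (fun z => u (t, z) i) y) x)
        * mul_inv_cancel₀ hμ0
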